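/- Suppose the power series ρ(z) = z + ∑_{n≥2} n c_n z^n has coefficients satisfying |c_n| ≤ (n^{n-2}/n!) A^{n-1} for all n ≥ 2, where A > 0. Then for every r with 0 < Ar < 1/e and every z ∈ ℂ with |z| = r, one has |ρ(z)| ≥ (1/A)(2x - ∑_{n=1}^∞ (n^{n-1}/n!) x^n) where x = Ar; in particular, using x = w e^{-w}, |ρ(z)| ≥ (1/A) w(2e^{-w} - 1) for the w ∈ (0,1) with we^{-w} = Ar. -/

import Mathlib

/-!
Bounding the terms of `ρ z - z` with the hypothesis on `c n` gives
`‖ρ z - z‖ ≤ (T(Ar) - Ar) / A`, where `T(x) = ∑_{n ≥ 1} n^(n-1) x^n / n!` is the tree function;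
it converges for `|x| < 1/e` because `n^(n-1) / n! ≤ e^n`. The triangle inequality then gives
the first bound, and the second is the first one rewritten with Euler's identity
`T(w e^(-w)) = w` for `0 < w < 1`.

For `|w| < 1/8` (so that `|w| e^|w| < 1/e`), expanding each `e^(-(n+1) w)` turns `T(w e^(-w))`
into an absolutely convergent double series in which the coefficient of `w^(m+1)` is, up to the
factor `(m+1)!`, the `(m+1)`-st finite difference of `k ↦ k^m` at `0`, so it vanishes for
`m ≥ 1`. Both sides of Euler's identity are real analytic on `(-1/8, 1)`, so the identity
propagates from a neighbourhood of `0` to all of `(0, 1)`.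
-/

open Real Finset
open scoped Nat ENNReal

theorem HasSum.sum_antidiagonal {α A : Type*} [AddCommMonoid α] [TopologicalSpace α]
    [ContinuousAdd α] [RegularSpace α] [AddMonoid A] [HasAntidiagonal A]
    {f : A × A → α} {a : α} (hf : HasSum f a) :
    HasSum (fun n => ∑ p ∈ antidiagonal n, f p) a :=
  (HasAntidiagonal.sigmaAntidiagonalEquivProd.hasSum_iff.2 hf).sigma fun n =>
    (antidiagonal n).sum_coe_sort f ▸ hasSum_fintype _

lemma hasSum_mul_pow_div_factorial (C t : ℝ) :
    HasSum (fun k => C * (t ^ k / k !)) (C * exp t) := by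
  rw [exp_eq_exp_ℝ]
  exact (NormedSpace.expSeries_div_hasSum_exp t).mul_left C

lemma sum_antidiagonal_neg_one_pow_mul_choose_mul_pow {n j : ℕ} (h : j < n) :
    ∑ p ∈ antidiagonal n, (-1 : ℝ) ^ p.2 * n.choose p.1 * (p.1 : ℝ) ^ j = 0 := by
  have hdiff := congrFun (fwdDiff_iter_pow_eq_zero_of_lt (R := ℝ) h) 0
  rw [fwdDiff_iter_eq_sum_shift] at hdiff
  rw [Nat.sum_antidiagonal_eq_sum_range_succ fun k l => (-1 : ℝ) ^ l * n.choose k * (k : ℝ) ^ j]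
  simpa using hdiff

lemma abs_mul_exp_abs_lt {w : ℝ} (hw : |w| < 1 / 8) : |w| * exp |w| < exp (-1) := by
  have h98 : exp (9 / 8) < 8 :=
    calc exp (9 / 8) < exp 2 := exp_lt_exp.2 (by norm_num)
      _ = exp 1 * exp 1 := by rw [← exp_add]; norm_num
      _ < 8 := by nlinarith [exp_pos 1, exp_one_lt_d9]
  calc |w| * exp |w| ≤ 1 / 8 * exp (1 / 8) := by gcongr
    _ = exp (9 / 8) * exp (-1) / 8 := by rw [← exp_add]; ring_nf
    _ < exp (-1) := by nlinarith [exp_pos (-1)]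

lemma abs_mul_exp_neg_lt {w : ℝ} (hw : w ∈ Set.Ioo (-(1 / 8)) 1) :
    |w * exp (-w)| < exp (-1) := by
  rcases lt_or_ge w 0 with hneg | hnonneg
  · have hw' : |w| < 1 / 8 := abs_lt.2 ⟨hw.1, by linarith⟩
    simpa [abs_mul, abs_of_neg hneg] using abs_mul_exp_abs_lt hw'
  · have hlt : w - 1 + 1 < exp (w - 1) := add_one_lt_exp (by linarith [hw.2])
    rw [abs_of_nonneg (by positivity)]
    calc w * exp (-w) < exp (w - 1) * exp (-w) := by gcongr; linarith
      _ = exp (-1) := by rw [← exp_add]; ring_nf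

noncomputable def treeCoeff : ℕ → ℝ
  | 0 => 0
  | n + 1 => (n + 1 : ℝ) ^ n / (n + 1)!

noncomputable def treeFunction (x : ℝ) : ℝ := ∑' n : ℕ, treeCoeff (n + 1) * x ^ (n + 1)

lemma treeCoeff_nonneg (n : ℕ) : 0 ≤ treeCoeff n := by
  cases n <;> simp only [treeCoeff] <;> positivity

lemma treeCoeff_le_exp_one_pow (n : ℕ) : treeCoeff n ≤ exp 1 ^ n := by
  cases n with
  | zero => simp [treeCoeff]
  | succ n =>
    calc treeCoeff (n + 1) = (n + 1 : ℝ) ^ n / (n + 1)! := rfl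
      _ ≤ (n + 1 : ℝ) ^ (n + 1) / (n + 1)! := by gcongr <;> linarith
      _ ≤ exp (n + 1) := pow_div_factorial_le_exp _ (by positivity) _
      _ = exp 1 ^ (n + 1) := by rw [← exp_nat_mul]; push_cast; ring_nf

lemma summable_treeCoeff_mul_pow {x : ℝ} (hx : |x| < exp (-1)) :
    Summable fun n => treeCoeff n * x ^ n := by
  have hq : exp 1 * |x| < 1 :=
    calc exp 1 * |x| < exp 1 * exp (-1) := by gcongr
      _ = 1 := by rw [← exp_add]; simp
  refine Summable.of_norm_bounded (summable_geometric_of_lt_one (by positivity) hq) fun n => ?_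
  rw [norm_mul, norm_pow, Real.norm_of_nonneg (treeCoeff_nonneg n), Real.norm_eq_abs, mul_pow]
  gcongr
  exact treeCoeff_le_exp_one_pow n

lemma hasSum_treeFunction {x : ℝ} (hx : |x| < exp (-1)) :
    HasSum (fun n => treeCoeff (n + 1) * x ^ (n + 1)) (treeFunction x) :=
  ((summable_nat_add_iff 1).2 (summable_treeCoeff_mul_pow hx)).hasSum

lemma treeFunction_eq_tsum {x : ℝ} (hx : |x| < exp (-1)) :
    treeFunction x = ∑' n, treeCoeff n * x ^ n := by
  rw [(summable_treeCoeff_mul_pow hx).tsum_eq_zero_add, treeCoeff, zero_mul, zero_add]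
  rfl

noncomputable def treeSeries : FormalMultilinearSeries ℝ ℝ ℝ :=
  .ofScalars ℝ treeCoeff

lemma exp_neg_one_le_radius_treeSeries :
    ((exp (-1)).toNNReal : ℝ≥0∞) ≤ treeSeries.radius := by
  refine treeSeries.le_radius_of_bound 1 fun n => ?_
  rw [treeSeries, FormalMultilinearSeries.ofScalars_norm, Real.norm_of_nonneg (treeCoeff_nonneg n),
    Real.coe_toNNReal _ (exp_pos _).le]
  calc treeCoeff n * exp (-1) ^ n ≤ exp 1 ^ n * exp (-1) ^ n := by
        gcongr; exact treeCoeff_le_exp_one_pow n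
    _ = 1 := by rw [← mul_pow, ← exp_add]; simp

lemma analyticOnNhd_treeFunction :
    AnalyticOnNhd ℝ treeFunction (Metric.ball 0 (exp (-1))) := by
  intro x hx
  have hsum : treeSeries.sum =ᶠ[nhds x] treeFunction := by
    filter_upwards [Metric.isOpen_ball.mem_nhds hx] with y hy
    rw [mem_ball_zero_iff, Real.norm_eq_abs] at hy
    rw [treeFunction_eq_tsum hy, treeSeries]
    exact (FormalMultilinearSeries.ofScalars_sum_eq treeCoeff y).trans
      (tsum_congr fun n => smul_eq_mul _ _)
  refine AnalyticAt.congr ?_ hsum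
  have hrad : 0 < treeSeries.radius :=
    lt_of_lt_of_le (by simpa using exp_pos (-1)) exp_neg_one_le_radius_treeSeries
  refine (treeSeries.hasFPowerSeriesOnBall hrad).analyticAt_of_mem ?_
  refine Metric.mem_eball.2 (lt_of_lt_of_le ?_ exp_neg_one_le_radius_treeSeries)
  rw [edist_zero_right, enorm_eq_nnnorm, ENNReal.coe_lt_coe, ← NNReal.coe_lt_coe, coe_nnnorm,
    Real.coe_toNNReal _ (exp_pos _).le]
  simpa using hx

lemma sum_antidiagonal_treeCoeff_mul (m : ℕ) :
    ∑ p ∈ antidiagonal (m + 1), treeCoeff (p.1 + 1) * ((-(p.1 + 1 : ℝ)) ^ p.2 / p.2 !) = 0 := by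
  have hsum :=
    sum_antidiagonal_neg_one_pow_mul_choose_mul_pow (n := m + 2) (j := m + 1) (by omega)
  rw [Finset.Nat.sum_antidiagonal_succ] at hsum
  simp only [Nat.cast_zero, zero_pow (Nat.succ_ne_zero m), mul_zero, zero_add] at hsum
  have hfac : (0 : ℝ) < (m + 2)! := Nat.cast_pos.2 (m + 2).factorial_pos
  rw [← mul_right_cancel_iff_of_pos hfac, sum_mul, zero_mul, ← hsum]
  refine sum_congr rfl fun ⟨i, k⟩ hik => ?_
  rw [HasAntidiagonal.mem_antidiagonal] at hik
  rw [show m + 2 = i + 1 + k by omega, show m + 1 = i + k by omega, Nat.cast_add_choose]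
  simp only [treeCoeff, neg_pow (_ + 1 : ℝ)]
  push_cast
  field_simp
  ring

lemma treeFunction_mul_exp_neg_of_abs_lt {w : ℝ} (hw : |w| < 1 / 8) :
    treeFunction (w * exp (-w)) = w := by
  set G : ℕ × ℕ → ℝ := fun p =>
    treeCoeff (p.1 + 1) * w ^ (p.1 + 1) * ((-(p.1 + 1 : ℝ) * w) ^ p.2 / p.2 !) with hG
  have hrow (n : ℕ) :
      HasSum (fun k => G (n, k)) (treeCoeff (n + 1) * (w * exp (-w)) ^ (n + 1)) := by
    convert hasSum_mul_pow_div_factorial (treeCoeff (n + 1) * w ^ (n + 1)) (-(n + 1 : ℝ) * w)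
      using 1
    rw [show -(n + 1 : ℝ) * w = (n + 1 : ℕ) * (-w) by push_cast; ring, exp_nat_mul]
    ring
  have habsrow (n : ℕ) :
      HasSum (fun k => |G (n, k)|) (treeCoeff (n + 1) * (|w| * exp |w|) ^ (n + 1)) := by
    convert hasSum_mul_pow_div_factorial (treeCoeff (n + 1) * |w| ^ (n + 1)) ((n + 1 : ℝ) * |w|)
      using 1
    · ext k
      simp only [hG, abs_mul, abs_div, abs_pow, abs_neg, Nat.abs_cast,
        abs_of_nonneg (treeCoeff_nonneg _)]
      rw [abs_of_nonneg (by positivity : (0 : ℝ) ≤ n + 1)]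
    · rw [show (n + 1 : ℝ) * |w| = (n + 1 : ℕ) * |w| by push_cast; ring, exp_nat_mul]
      ring
  have hsummable : Summable G := by
    refine Summable.of_abs ((summable_prod_of_nonneg fun _ => abs_nonneg _).2
      ⟨fun n => (habsrow n).summable, ?_⟩)
    simp_rw [fun n => (habsrow n).tsum_eq]
    refine (summable_nat_add_iff 1).2 (summable_treeCoeff_mul_pow ?_)
    rw [abs_of_nonneg (by positivity)]
    exact abs_mul_exp_abs_lt hw
  have hdiag : (fun m => ∑ p ∈ antidiagonal m, G p) = fun m => if m = 0 then w else 0 := by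
    ext (_ | m)
    · simp [hG, treeCoeff]
    · rw [if_neg m.succ_ne_zero]
      calc ∑ p ∈ antidiagonal (m + 1), G p
          = ∑ p ∈ antidiagonal (m + 1),
              w ^ (m + 2) * (treeCoeff (p.1 + 1) * ((-(p.1 + 1 : ℝ)) ^ p.2 / p.2 !)) := by
            refine sum_congr rfl fun ⟨i, k⟩ hik => ?_
            rw [HasAntidiagonal.mem_antidiagonal] at hik
            rw [show m + 2 = i + 1 + k by omega]
            simp only [hG, mul_pow]
            ring
        _ = 0 := by rw [← mul_sum, sum_antidiagonal_treeCoeff_mul, mul_zero]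
  have hw : w = ∑' p, G p :=
    (hasSum_ite_eq 0 w).unique (hdiag ▸ hsummable.hasSum.sum_antidiagonal)
  exact hw ▸ (hsummable.hasSum.prod_fiberwise hrow).tsum_eq

theorem treeFunction_mul_exp_neg {w : ℝ} (hw : w ∈ Set.Ioo (0 : ℝ) 1) :
    treeFunction (w * exp (-w)) = w := by
  have hF : AnalyticOnNhd ℝ (fun v => treeFunction (v * exp (-v))) (Set.Ioo (-(1 / 8)) 1) :=
    fun v hv =>
      (analyticOnNhd_treeFunction _ (mem_ball_zero_iff.2 (abs_mul_exp_neg_lt hv))).comp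
        (f := fun v => v * exp (-v)) (by fun_prop)
  have hsmall : (fun v => treeFunction (v * exp (-v))) =ᶠ[nhds 0] id := by
    filter_upwards [Ioo_mem_nhds (by norm_num : -(1 / 8 : ℝ) < 0) (by norm_num : (0 : ℝ) < 1 / 8)]
      with v hv
    exact treeFunction_mul_exp_neg_of_abs_lt (abs_lt.2 hv)
  exact hF.eqOn_of_preconnected_of_eventuallyEq analyticOnNhd_id isPreconnected_Ioo
    (by norm_num) hsmall ⟨by linarith [hw.1], hw.2⟩

lemma norm_tsum_le_treeFunction {c : ℕ → ℂ} {A r : ℝ} (hA : 0 < A)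
    (hAr : A * r < exp (-1))
    (hc : ∀ n ≥ 2, ‖c n‖ ≤ ((n : ℝ) ^ (n - 2) / n !) * A ^ (n - 1))
    {z : ℂ} (hz : ‖z‖ = r) :
    ‖∑' n : ℕ, ((n : ℂ) + 2) * c (n + 2) * z ^ (n + 2)‖ ≤
      (treeFunction (A * r) - A * r) / A := by
  have hr : 0 ≤ r := hz ▸ norm_nonneg z
  have hterm (n : ℕ) : ‖((n : ℂ) + 2) * c (n + 2) * z ^ (n + 2)‖ ≤
      treeCoeff (n + 2) * (A * r) ^ (n + 2) / A := by
    have hcn := hc (n + 2) (by omega)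
    simp only [Nat.add_sub_cancel, Nat.add_succ_sub_one] at hcn
    rw [norm_mul, norm_mul, norm_pow, hz,
      show ((n : ℂ) + 2) = ((n + 2 : ℕ) : ℂ) by push_cast; ring, Complex.norm_natCast]
    calc ((n + 2 : ℕ) : ℝ) * ‖c (n + 2)‖ * r ^ (n + 2)
        ≤ ((n + 2 : ℕ) : ℝ) * ((n + 2 : ℕ) ^ n / (n + 2)! * A ^ (n + 1)) * r ^ (n + 2) := by
          gcongr
      _ = treeCoeff (n + 2) * (A * r) ^ (n + 2) / A := by
        simp only [treeCoeff]
        push_cast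
        field_simp
        ring
  have hx : |A * r| < exp (-1) := by rwa [abs_of_nonneg (by positivity)]
  have htail : HasSum (fun n => treeCoeff (n + 2) * (A * r) ^ (n + 2))
      (treeFunction (A * r) - A * r) := by
    simpa [treeCoeff] using (hasSum_nat_add_iff' 1).2 (hasSum_treeFunction hx)
  exact tsum_of_norm_bounded (htail.div_const A) hterm

theorem density_series_lower_bound
    (ρ : ℂ → ℂ) (c : ℕ → ℂ) (A : ℝ) (hA : 0 < A)
    (hρ : ∀ z : ℂ, ρ z = z + ∑' n : ℕ, ((n : ℂ) + 2) * c (n + 2) * z ^ (n + 2))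
    (hc : ∀ n ≥ 2, ‖c n‖ ≤ ((n : ℝ) ^ (n - 2) / Nat.factorial n) * A ^ (n - 1)) :
    ∀ r : ℝ, 0 < r → A * r < 1 / Real.exp 1 →
      ∀ z : ℂ, ‖z‖ = r →
        ((1 / A) * (2 * (A * r) -
            ∑' n : ℕ, ((n + 1 : ℝ) ^ n / Nat.factorial (n + 1)) * (A * r) ^ (n + 1))
          ≤ ‖ρ z‖) ∧
        (∀ w ∈ Set.Ioo (0 : ℝ) 1, w * Real.exp (-w) = A * r →
          (1 / A) * (w * (2 * Real.exp (-w) - 1)) ≤ ‖ρ z‖) := by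
  intro r _ hAr z hz
  have hx : A * r < exp (-1) := by rwa [exp_neg, inv_eq_one_div]
  have hlower : 1 / A * (2 * (A * r) - treeFunction (A * r)) ≤ ‖ρ z‖ :=
    calc 1 / A * (2 * (A * r) - treeFunction (A * r))
        = ‖z‖ - (treeFunction (A * r) - A * r) / A := by rw [hz]; field_simp; ring
      _ ≤ ‖z‖ - ‖∑' n : ℕ, ((n : ℂ) + 2) * c (n + 2) * z ^ (n + 2)‖ := by
        gcongr; exact norm_tsum_le_treeFunction hA hx hc hz
      _ ≤ ‖ρ z‖ := by
        rw [hρ, ← sub_neg_eq_add, ← norm_neg (∑' n : ℕ, _)]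
        exact norm_sub_norm_le _ _
  refine ⟨hlower, fun w hw hwx => ?_⟩
  calc 1 / A * (w * (2 * exp (-w) - 1)) = 1 / A * (2 * (A * r) - treeFunction (A * r)) := by
        rw [← hwx, treeFunction_mul_exp_neg hw]; ring
    _ ≤ ‖ρ z‖ := hlower
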